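/- arXiv:2604.07234 — 5 statements merged into one kernel-verified Lean document; each statement's English description precedes it below -/
import Mathlib

section
/- For all positive integers M ≤ N, with (X',Y) drawn from the null model, P(Z_{X',Y} = 0) = P(G_1 + G_2 + ⋯ + G_M > N), where G_1,…,G_M are i.i.d. geometric random variables with P(G_i = k) = 2^{−k} for every integer k ≥ 1. -/
/-!
Write `A(n, m)` (`supersequenceCount n m`) for the number of binary words of length `n` that
contain a fixed binary word of length `m` as a subsequence. Splitting on whether the first letter
of the long word equals the first letter of the short one gives the Pascal recursion
`A(n+1, m+1) = A(n, m) + A(n, m+1)`, so `A` does not depend on the fixed word and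
`P(Z_{X',Y} = 0) = 1 - A(N, M) / 2^N`. On the other side, conditioning on `G_1` gives
`P(G_1 + ⋯ + G_m ≤ n) = ∑_{k=1}^{n} 2^{-k} P(G_2 + ⋯ + G_m ≤ n - k)`, which is the column form
`A(n, m+1) = ∑_{j<n} A(j, m)` of the same recursion, so `P(G_1 + ⋯ + G_M ≤ N) = A(N, M) / 2^N`.
-/

open Finset
open scoped List ENNReal

/-- Number of subsequence embeddings of `y` into `x`. -/
noncomputable def subseqCount (N M : ℕ) (x : Fin N → Bool) (y : Fin M → Bool) : ℕ :=
  Nat.card {σ : Fin M → Fin N // StrictMono σ ∧ ∀ j, x (σ j) = y j}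

/-- Probability of an event under the null model. -/
noncomputable def nullProb (N M : ℕ)
    (E : (Fin N → Bool) → (Fin M → Bool) → Prop) : ℝ :=
  (Nat.card {p : (Fin N → Bool) × (Fin M → Bool) // E p.1 p.2} : ℝ) /
    ((2 : ℝ) ^ N * (2 : ℝ) ^ M)

theorem List.ofFn_sublist_ofFn_iff {α : Type*} {m n : ℕ} (x : Fin n → α) (y : Fin m → α) :
    List.ofFn y <+ List.ofFn x ↔ ∃ σ : Fin m → Fin n, StrictMono σ ∧ ∀ j, x (σ j) = y j := by
  rw [List.sublist_iff_exists_fin_orderEmbedding_get_eq]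
  simp only [List.get_ofFn]
  constructor
  · rintro ⟨f, hf⟩
    refine ⟨fun j => Fin.cast List.length_ofFn (f (Fin.cast List.length_ofFn.symm j)),
      fun _ _ hij => f.strictMono hij, fun j => ?_⟩
    simpa using (hf (Fin.cast List.length_ofFn.symm j)).symm
  · rintro ⟨σ, hσ, h⟩
    exact ⟨(Fin.castOrderIso List.length_ofFn).toOrderEmbedding.trans
      ((OrderEmbedding.ofStrictMono σ hσ).trans
        (Fin.castOrderIso List.length_ofFn.symm).toOrderEmbedding),
      fun _ => (h _).symm⟩

theorem subseqCount_eq_zero_iff {N M : ℕ} (x : Fin N → Bool) (y : Fin M → Bool) :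
    subseqCount N M x y = 0 ↔ ¬ List.ofFn y <+ List.ofFn x := by
  rw [subseqCount, Nat.card_eq_zero, List.ofFn_sublist_ofFn_iff]
  simp [isEmpty_subtype, not_infinite_iff_finite.mpr Subtype.finite]

theorem List.cons_sublist_cons_iff_of_ne {α : Type*} {a b : α} {l₁ l₂ : List α} (h : a ≠ b) :
    a :: l₁ <+ b :: l₂ ↔ a :: l₁ <+ l₂ :=
  ⟨List.Sublist.of_cons_of_ne h, List.Sublist.cons b⟩

theorem Nat.card_subtype_pi_fin_succ {α : Type*} [Fintype α] {n : ℕ}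
    (P : (Fin (n + 1) → α) → Prop) :
    Nat.card {x // P x} = ∑ a : α, Nat.card {x : Fin n → α // P (Fin.cons a x)} := by
  rw [← Nat.card_sigma,
    ← Nat.card_congr (Equiv.subtypeProdEquivSigmaSubtype fun a x => P (Fin.cons a x))]
  exact Nat.card_congr ((Fin.consEquiv fun _ => α).symm.subtypeEquiv fun x => by simp)

def supersequenceCount : ℕ → ℕ → ℕ
  | n, 0 => 2 ^ n
  | 0, _ + 1 => 0
  | n + 1, m + 1 => supersequenceCount n m + supersequenceCount n (m + 1)

theorem supersequenceCount_succ_right (n m : ℕ) :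
    supersequenceCount n (m + 1) = ∑ j ∈ range n, supersequenceCount j m := by
  induction n with
  | zero => rfl
  | succ n ih => rw [sum_range_succ, ← ih, supersequenceCount, add_comm]

theorem card_supersequences (t : List Bool) (n : ℕ) :
    Nat.card {x : Fin n → Bool // t <+ List.ofFn x} = supersequenceCount n t.length := by
  induction n generalizing t with
  | zero => cases t <;> simp [supersequenceCount]
  | succ n ih =>
    cases t with
    | nil => simp [supersequenceCount]
    | cons b t =>
      rw [Nat.card_subtype_pi_fin_succ, Fintype.sum_bool, List.length_cons, supersequenceCount,
        ← ih, ← List.length_cons (a := b), ← ih (b :: t)]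
      simp only [List.ofFn_succ, Fin.cons_zero, Fin.cons_succ]
      cases b
      · simp only [List.cons_sublist_cons,
          List.cons_sublist_cons_iff_of_ne (show false ≠ true by decide), add_comm]
      · simp only [List.cons_sublist_cons,
          List.cons_sublist_cons_iff_of_ne (show true ≠ false by decide)]

theorem card_sublist_pairs (N M : ℕ) :
    Nat.card {p : (Fin N → Bool) × (Fin M → Bool) // List.ofFn p.2 <+ List.ofFn p.1} =
      2 ^ M * supersequenceCount N M := by
  calc _ = Nat.card (Σ y : Fin M → Bool, {x : Fin N → Bool // List.ofFn y <+ List.ofFn x}) :=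
        Nat.card_congr (((Equiv.prodComm _ _).subtypeEquiv fun _ => Iff.rfl).trans
          (Equiv.subtypeProdEquivSigmaSubtype _))
    _ = 2 ^ M * supersequenceCount N M := by
        simp only [Nat.card_sigma, card_supersequences, List.length_ofFn]
        simp

theorem nullProb_subseqCount_eq_zero (N M : ℕ) :
    nullProb N M (fun x y => subseqCount N M x y = 0) = 1 - supersequenceCount N M / 2 ^ N := by
  have hsplit := Nat.card_congr (Equiv.sumCompl fun p : (Fin N → Bool) × (Fin M → Bool) =>
    List.ofFn p.2 <+ List.ofFn p.1)
  rw [Nat.card_sum, card_sublist_pairs, Nat.card_prod, Nat.card_fun, Nat.card_fun, Nat.card_fin,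
    Nat.card_fin, Nat.card_eq_fintype_card (α := Bool), Fintype.card_bool] at hsplit
  have hzero : Nat.card {p : (Fin N → Bool) × (Fin M → Bool) // subseqCount N M p.1 p.2 = 0} =
      Nat.card {p : (Fin N → Bool) × (Fin M → Bool) // ¬ List.ofFn p.2 <+ List.ofFn p.1} :=
    Nat.card_congr (Equiv.subtypeEquivRight fun p => subseqCount_eq_zero_iff p.1 p.2)
  have hcompl : (Nat.card {p : (Fin N → Bool) × (Fin M → Bool) //
      ¬ List.ofFn p.2 <+ List.ofFn p.1} : ℝ) = 2 ^ N * 2 ^ M - 2 ^ M * supersequenceCount N M :=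
    eq_sub_of_add_eq' (by exact_mod_cast hsplit)
  rw [nullProb, hzero, hcompl]
  field_simp

noncomputable def geomWeight (k : ℕ) : ℝ≥0∞ := if 1 ≤ k then 2⁻¹ ^ k else 0

theorem tsum_geomWeight : ∑' k, geomWeight k = 1 := by
  rw [tsum_eq_zero_add' ENNReal.summable]
  simp [geomWeight, ENNReal.tsum_geometric_add_one, ENNReal.one_sub_inv_two,
    ENNReal.inv_mul_cancel]

theorem toReal_prod_geomWeight {ι : Type*} [Fintype ι] (g : ι → ℕ) :
    (∏ i, geomWeight (g i)).toReal = if ∀ i, 1 ≤ g i then ∏ i, (2 : ℝ)⁻¹ ^ g i else 0 := by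
  simp only [geomWeight, Fintype.prod_ite_zero]
  split_ifs <;> simp

theorem ENNReal.tsum_pi_fin_succ {α : Type*} {m : ℕ} (F : (Fin (m + 1) → α) → ℝ≥0∞) :
    ∑' g, F g = ∑' a, ∑' g : Fin m → α, F (Fin.cons a g) := by
  rw [← (Fin.consEquiv fun _ => α).tsum_eq, ENNReal.tsum_prod']
  rfl

theorem ENNReal.tsum_pi_fin_prod {α : Type*} (w : α → ℝ≥0∞) (m : ℕ) :
    ∑' g : Fin m → α, ∏ i, w (g i) = (∑' a, w a) ^ m := by
  induction m with
  | zero => simp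
  | succ m ih =>
    simp only [ENNReal.tsum_pi_fin_succ, Fin.prod_univ_succ, Fin.cons_zero, Fin.cons_succ,
      ENNReal.tsum_mul_left, ih, ENNReal.tsum_mul_right, pow_succ']

theorem tsum_geomWeight_sum_le (m n : ℕ) :
    ∑' g : Fin m → ℕ, (if ∑ i, g i ≤ n then ∏ i, geomWeight (g i) else 0) =
      supersequenceCount n m * 2⁻¹ ^ n := by
  induction m generalizing n with
  | zero => simp [supersequenceCount, ← mul_pow, ENNReal.mul_inv_cancel]
  | succ m ih =>
    have hfirst : ∀ k, ∑' g : Fin m → ℕ,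
        (if k + ∑ i, g i ≤ n then geomWeight k * ∏ i, geomWeight (g i) else 0) =
          if k ≤ n then geomWeight k * (supersequenceCount (n - k) m * 2⁻¹ ^ (n - k)) else 0 := by
      intro k
      split_ifs with hk
      · simp only [← ih, ← ENNReal.tsum_mul_left, mul_ite, mul_zero, Nat.le_sub_iff_add_le' hk]
      · exact ENNReal.tsum_eq_zero.2 fun g => if_neg (by omega)
    rw [ENNReal.tsum_pi_fin_succ]
    simp only [Fin.sum_cons, Fin.prod_univ_succ, Fin.cons_zero, Fin.cons_succ, hfirst]
    rw [tsum_eq_sum (s := range (n + 1)) fun k hk => if_neg (by simpa [Nat.lt_succ_iff] using hk),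
      sum_range_succ', supersequenceCount_succ_right, Nat.cast_sum, sum_mul,
      ← sum_range_reflect (fun j => (supersequenceCount j m : ℝ≥0∞) * 2⁻¹ ^ n)]
    simp only [geomWeight, zero_le, if_true, nonpos_iff_eq_zero, one_ne_zero, if_false, zero_mul,
      add_zero, le_add_iff_nonneg_left]
    refine sum_congr rfl fun i hi => ?_
    have hi : i < n := mem_range.1 hi
    rw [if_pos (show i + 1 ≤ n by omega), show n - (i + 1) = n - 1 - i by omega, mul_left_comm,
      ← pow_add, show i + 1 + (n - 1 - i) = n by omega]

theorem tsum_geom_sum_gt (m n : ℕ) :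
    ∑' g : Fin m → ℕ, (if (∀ i, 1 ≤ g i) ∧ n < ∑ i, g i then ∏ i, (2 : ℝ)⁻¹ ^ g i else 0) =
      1 - supersequenceCount n m / 2 ^ n := by
  have hsplit : ∑' g : Fin m → ℕ, (if ∑ i, g i ≤ n then ∏ i, geomWeight (g i) else 0) +
      ∑' g : Fin m → ℕ, (if n < ∑ i, g i then ∏ i, geomWeight (g i) else 0) = 1 := by
    rw [← ENNReal.tsum_add, ← one_pow m, ← tsum_geomWeight, ← ENNReal.tsum_pi_fin_prod]
    refine tsum_congr fun g => ?_
    split_ifs <;> first | omega | simp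
  rw [tsum_geomWeight_sum_le] at hsplit
  have hgt := ENNReal.eq_sub_of_add_eq (by finiteness) ((add_comm _ _).trans hsplit)
  have hfin := ENNReal.ne_top_of_tsum_ne_top (hgt ▸ ENNReal.sub_ne_top ENNReal.one_ne_top)
  calc _ = (∑' g : Fin m → ℕ, (if n < ∑ i, g i then ∏ i, geomWeight (g i) else 0)).toReal := by
        rw [ENNReal.tsum_toReal_eq hfin]
        refine tsum_congr fun g => ?_
        rw [apply_ite ENNReal.toReal, toReal_prod_geomWeight, ENNReal.toReal_zero, ite_and]
        split_ifs <;> rfl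
    _ = 1 - supersequenceCount n m / 2 ^ n := by
        rw [hgt, ENNReal.toReal_sub_of_le (hsplit ▸ le_self_add) ENNReal.one_ne_top]
        simp [div_eq_mul_inv]

theorem null_zero_prob_geometric_general (N M : ℕ) :
    nullProb N M (fun x y => subseqCount N M x y = 0) =
      ∑' g : Fin M → ℕ,
        if (∀ i, 1 ≤ g i) ∧ N < ∑ i, g i then ∏ i, ((2 : ℝ)⁻¹) ^ g i else 0 := by
  rw [nullProb_subseqCount_eq_zero, tsum_geom_sum_gt]

/-- Under the null model, `P(Z_{X',Y} = 0)` equals the probability that a sum of `M`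
i.i.d. geometric random variables (`P(G = k) = 2^{-k}` for `k ≥ 1`) exceeds `N`;
the right-hand side is written as the sum over all outcomes `g : Fin M → ℕ` with
`g i ≥ 1` for all `i` and `∑ g i > N` of their probabilities `∏ 2^{-g i}`. -/
theorem null_zero_prob_geometric (N M : ℕ) (hM : 1 ≤ M) (hMN : M ≤ N) :
    nullProb N M (fun x y => subseqCount N M x y = 0) =
      ∑' g : Fin M → ℕ,
        if (∀ i, 1 ≤ g i) ∧ N < ∑ i, g i then ∏ i, ((2 : ℝ)⁻¹) ^ g i else 0 :=
  null_zero_prob_geometric_general N M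
end

section
/- (Gap product formula.) For all positive integers 1 ≤ M ≤ N, Σ_{σ,τ ∈ Σ_{N,M}} 2^{⟨σ,τ⟩} = Σ_{ℓ=0}^{M} Σ_{1 ≤ j_1 < ⋯ < j_ℓ ≤ M} Σ_{1 ≤ i_1 < ⋯ < i_ℓ ≤ N} Π_{k=1}^{ℓ+1} binom(i_k − i_{k−1} − 1, j_k − j_{k−1} − 1)², with the boundary convention i_0 = j_0 = 0, i_{ℓ+1} = N+1, j_{ℓ+1} = M+1, and with binom(m,r) := 0 whenever r < 0 or r > m. -/
open Classical in
/-- `Σ_{σ,τ ∈ Σ_{N,M}} 2^{⟨σ,τ⟩}`, where `Σ_{N,M}` is the set of strictly increasing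
maps `Fin M → Fin N` and `⟨σ,τ⟩ = #{j : σ j = τ j}` is the overlap. -/
noncomputable def overlapSum (N M : ℕ) : ℕ :=
  ∑ σ : Fin M → Fin N, ∑ τ : Fin M → Fin N,
    if StrictMono σ ∧ StrictMono τ then
      2 ^ (Finset.univ.filter fun j => σ j = τ j).card
    else 0

/-- The list `0, s_1 < s_2 < ⋯ , top + 1` of boundary points associated to a finite set
`S ⊆ {1,…,top}`. -/
def sortedPts (S : Finset ℕ) (top : ℕ) : List ℕ :=
  (0 :: S.sort (· ≤ ·)) ++ [top + 1]

/-- `Π_{k=1}^{ℓ+1} binom(i_k - i_{k-1} - 1, j_k - j_{k-1} - 1)²` with the boundary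
convention `i_0 = j_0 = 0`, `i_{ℓ+1} = N + 1`, `j_{ℓ+1} = M + 1` (and `binom(m,r) = 0`
for `r > m`, as for `Nat.choose`). -/
def gapProd (I J : Finset ℕ) (N M ℓ : ℕ) : ℕ :=
  ∏ k ∈ Finset.range (ℓ + 1),
    (Nat.choose ((sortedPts I N).getD (k + 1) 0 - (sortedPts I N).getD k 0 - 1)
      ((sortedPts J M).getD (k + 1) 0 - (sortedPts J M).getD k 0 - 1)) ^ 2

/-!
Expanding `2 ^ ⟨σ,τ⟩` as the number of subsets `S` of the agreement set of `σ` and `τ`, and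
recording `S` by the points `J = S + 1` and `I = σ(S) + 1`, the left side becomes
`∑_{I,J} c(I,J)²`, where `c(I,J)` counts the increasing maps `σ` with `σ(j_k) = i_k` for all `k`.
Such a map is an independent choice of increasing maps between consecutive gaps
`(j_{k-1}, j_k) → (i_{k-1}, i_k)`, so `c(I,J)` is the product of the binomial coefficients;
the induction peels off the largest pinned pair `(i_ℓ, j_ℓ)`.

Increasing maps `Fin M → Fin N` are handled through their images, the `M`-subsets `A` of
`{1,…,N}`: `σ (j - 1) = i - 1` becomes "`i ∈ A` and `i` is the `j`-th smallest element of `A`".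
-/

open Finset

namespace Finset

variable {α β : Type*} [LinearOrder α] [LinearOrder β]

def rank (s : Finset α) (a : α) : ℕ := #{x ∈ s | x ≤ a}

lemma rank_lt_rank {s : Finset α} {a b : α} (hb : b ∈ s) (hab : a < b) :
    s.rank a < s.rank b := by
  refine card_lt_card ⟨fun x => ?_, fun h => ?_⟩
  · simp only [mem_filter]
    exact fun h => ⟨h.1, h.2.trans hab.le⟩
  · exact (mem_filter.1 (h (mem_filter.2 ⟨hb, le_rfl⟩))).2.not_gt hab

lemma rank_strictMonoOn (s : Finset α) : StrictMonoOn s.rank s :=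
  fun _ _ _ hb hab => rank_lt_rank hb hab

lemma rank_mem_Icc {s : Finset α} {a : α} (ha : a ∈ s) : s.rank a ∈ Icc 1 #s :=
  mem_Icc.2 ⟨card_pos.2 ⟨a, mem_filter.2 ⟨ha, le_rfl⟩⟩, card_filter_le _ _⟩

lemma rank_eq_card_filter_lt_add_one {s : Finset α} {a : α} (ha : a ∈ s) :
    s.rank a = #(s.filter (· < a)) + 1 := by
  rw [rank, ← card_insert_of_notMem (a := a) (by simp)]
  congr 1
  ext x
  simp only [mem_filter, mem_insert]
  grind

lemma rank_filter_lt {s : Finset α} {a b : α} (hab : a < b) :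
    (s.filter (· < b)).rank a = s.rank a := by
  rw [rank, rank, filter_filter]
  congr 1
  exact filter_congr fun x _ => ⟨fun h => h.2, fun h => ⟨h.trans_lt hab, h⟩⟩

lemma rank_image {s : Finset α} {f : α → β} (hf : StrictMonoOn f s) {a : α} (ha : a ∈ s) :
    (s.image f).rank (f a) = s.rank a := by
  rw [rank, filter_image, card_image_of_injOn (hf.injOn.mono (filter_subset _ _)), rank]
  congr 1
  exact filter_congr fun x hx => hf.le_iff_le hx ha

lemma eqOn_of_image_eq_image {s : Finset α} {f g : α → β} (hf : StrictMonoOn f s)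
    (hg : StrictMonoOn g s) (h : s.image f = s.image g) : Set.EqOn f g s := by
  intro a ha
  refine (rank_strictMonoOn _).injOn (h ▸ mem_image_of_mem f ha) (mem_image_of_mem g ha) ?_
  rw [rank_image hg ha, ← h, rank_image hf ha]

lemma card_filter_rank_image_eq {s : Finset α} {f g : α → β}
    (hf : StrictMonoOn f s) (hg : StrictMonoOn g s) :
    #{b ∈ s.image f ∩ s.image g | (s.image f).rank b = (s.image g).rank b} =
      #{a ∈ s | f a = g a} := by
  rw [← card_image_of_injOn (hf.injOn.mono (filter_subset _ s))]
  congr 1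
  ext b
  simp only [mem_filter, mem_inter, mem_image]
  constructor
  · rintro ⟨⟨⟨a, ha, rfl⟩, ⟨a', ha', hfg⟩⟩, hrank⟩
    have hfa := rank_image hf ha
    have hga' := rank_image hg ha'
    rw [hfg] at hga'
    obtain rfl := (rank_strictMonoOn s).injOn ha ha' (hfa.symm.trans (hrank.trans hga'))
    exact ⟨a, ⟨ha, hfg.symm⟩, rfl⟩
  · rintro ⟨a, ⟨ha, hfg⟩, rfl⟩
    refine ⟨⟨⟨a, ha, rfl⟩, ⟨a, ha, hfg.symm⟩⟩, ?_⟩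
    rw [hfg, rank_image hg ha, ← hfg, rank_image hf ha]

lemma insert_filter_lt_union_filter_gt {s : Finset α} {a : α} (ha : a ∈ s) :
    insert a (s.filter (· < a) ∪ s.filter (a < ·)) = s := by
  ext x
  simp only [mem_insert, mem_union, mem_filter]
  grind

lemma filter_lt_insert_union {B C : Finset α} {a : α} (hB : ∀ x ∈ B, x < a)
    (hC : ∀ x ∈ C, a < x) : (insert a (B ∪ C)).filter (· < a) = B := by
  ext x
  simp only [mem_insert, mem_union, mem_filter]
  grind

lemma filter_gt_insert_union {B C : Finset α} {a : α} (hB : ∀ x ∈ B, x < a)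
    (hC : ∀ x ∈ C, a < x) : (insert a (B ∪ C)).filter (a < ·) = C := by
  ext x
  simp only [mem_insert, mem_union, mem_filter]
  grind

lemma card_insert_union {B C : Finset α} {a : α} (hB : ∀ x ∈ B, x < a)
    (hC : ∀ x ∈ C, a < x) : #(insert a (B ∪ C)) = #B + #C + 1 := by
  rw [card_insert_of_notMem, card_union_of_disjoint]
  · exact disjoint_left.2 fun x hxB hxC => (hB x hxB).not_gt (hC x hxC)
  · simp only [mem_union, not_or]
    exact ⟨fun h => (hB a h).false, fun h => (hC a h).false⟩

lemma card_filter_mem_and_filter_lt_mem {s : Finset α} {a : α} {m k : ℕ}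
    {Q : Finset (Finset α)} (hQ : Q ⊆ powersetCard k (s.filter (· < a))) (ha : a ∈ s)
    (hk : k < m) :
    #{A ∈ powersetCard m s | a ∈ A ∧ A.filter (· < a) ∈ Q} =
      #Q * (#(s.filter (a < ·))).choose (m - k - 1) := by
  rw [← card_powersetCard, ← card_product]
  have hQ' : ∀ B ∈ Q, #B = k ∧ B ⊆ s ∧ ∀ x ∈ B, x < a := fun B hB => by
    obtain ⟨hsub, hcard⟩ := mem_powersetCard.1 (hQ hB)
    exact ⟨hcard, hsub.trans (filter_subset _ _), fun x hx => (mem_filter.1 (hsub hx)).2⟩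
  refine card_nbij' (fun A => (A.filter (· < a), A.filter (a < ·)))
    (fun p => insert a (p.1 ∪ p.2)) ?_ ?_ ?_ ?_
  · intro A hA
    simp only [coe_filter, mem_powersetCard, Set.mem_ofPred_eq, mem_coe, mem_product] at hA ⊢
    obtain ⟨⟨hsub, hcard⟩, haA, hQA⟩ := hA
    refine ⟨hQA, filter_subset_filter (a < ·) hsub, ?_⟩
    have := card_insert_union (a := a) (B := A.filter (· < a)) (C := A.filter (a < ·))
      (fun x hx => (mem_filter.1 hx).2) (fun x hx => (mem_filter.1 hx).2)
    rw [insert_filter_lt_union_filter_gt haA, (hQ' _ hQA).1] at this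
    omega
  · rintro ⟨B, C⟩ hBC
    simp only [coe_filter, mem_powersetCard, Set.mem_ofPred_eq, mem_coe, mem_product] at hBC ⊢
    obtain ⟨hBQ, hCs, hCcard⟩ := hBC
    obtain ⟨hBcard, hBs, hBa⟩ := hQ' B hBQ
    have hCa : ∀ x ∈ C, a < x := fun x hx => (mem_filter.1 (hCs hx)).2
    refine ⟨⟨insert_subset ha (union_subset hBs (hCs.trans (filter_subset _ _))), ?_⟩,
      mem_insert_self _ _, by rwa [filter_lt_insert_union hBa hCa]⟩
    rw [card_insert_union hBa hCa]
    omega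
  · intro A hA
    exact insert_filter_lt_union_filter_gt (mem_filter.1 hA).2.1
  · rintro ⟨B, C⟩ hBC
    simp only [coe_product, Set.mem_prod, mem_coe, mem_powersetCard] at hBC
    have hCa : ∀ x ∈ C, a < x := fun x hx => (mem_filter.1 (hBC.2.1 hx)).2
    simp only [filter_lt_insert_union (hQ' B hBC.1).2.2 hCa,
      filter_gt_insert_union (hQ' B hBC.1).2.2 hCa]

lemma sort_insert_of_forall_lt {s : Finset α} {a : α} (h : ∀ b ∈ s, b < a) :
    (insert a s).sort (· ≤ ·) = s.sort (· ≤ ·) ++ [a] := by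
  refine (sortedLT_sort _).pairwise.eq_of_mem_iff ?_ fun x => by simp [or_comm]
  exact List.pairwise_append.2 ⟨(sortedLT_sort _).pairwise, by simp, by simpa using h⟩

lemma sum_card_filter_sq {ι κ : Type*} (X : Finset ι) (P : Finset κ) (p : ι → κ → Prop)
    [∀ x a, Decidable (p x a)] :
    ∑ x ∈ X, #{a ∈ P | p x a} ^ 2 = ∑ a ∈ P, ∑ b ∈ P, #{x ∈ X | p x a ∧ p x b} := by
  simp_rw [sq, card_filter, sum_mul_sum, ite_zero_mul_ite_zero, one_mul]
  rw [sum_comm]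
  exact sum_congr rfl fun _ _ => sum_comm

end Finset

lemma StrictMono.fin_val_add_one {N M : ℕ} {σ : Fin M → Fin N} (hσ : StrictMono σ) :
    StrictMono fun t => (σ t : ℕ) + 1 :=
  fun _ _ h => Nat.succ_lt_succ (hσ h)

lemma sum_strictMono_eq_sum_powersetCard {β : Type*} [AddCommMonoid β] (N M : ℕ)
    [DecidablePred fun σ : Fin M → Fin N => StrictMono σ] (F : Finset ℕ → β) :
    ∑ σ : Fin M → Fin N with StrictMono σ, F (univ.image fun t => (σ t : ℕ) + 1) =
      ∑ A ∈ powersetCard M (Icc 1 N), F A := by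
  refine sum_nbij (fun σ => univ.image fun t => (σ t : ℕ) + 1) ?_ ?_ ?_ fun _ _ => rfl
  · intro σ hσ
    refine mem_powersetCard.2 ⟨fun a ha => ?_, ?_⟩
    · obtain ⟨t, -, rfl⟩ := mem_image.1 ha
      exact mem_Icc.2 ⟨Nat.succ_pos _, (σ t).isLt⟩
    · rw [card_image_of_injective _ (mem_filter.1 hσ).2.fin_val_add_one.injective, card_univ,
        Fintype.card_fin]
  · intro σ hσ τ hτ h
    replace hσ := (mem_filter.1 (mem_coe.1 hσ)).2
    replace hτ := (mem_filter.1 (mem_coe.1 hτ)).2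
    have := eqOn_of_image_eq_image (hσ.fin_val_add_one.strictMonoOn _)
      (hτ.fin_val_add_one.strictMonoOn _) h
    exact funext fun t => Fin.ext (Nat.succ_injective (this (mem_coe.2 (mem_univ t))))
  · intro A hA
    obtain ⟨hAsub, hAcard⟩ := mem_powersetCard.1 hA
    set e := A.orderEmbOfFin hAcard
    have he (t : Fin M) : 1 ≤ e t ∧ e t ≤ N := mem_Icc.1 (hAsub (A.orderEmbOfFin_mem hAcard t))
    refine ⟨fun t => ⟨e t - 1, by have := he t; omega⟩, ?_, ?_⟩
    · refine mem_coe.2 (mem_filter.2 ⟨mem_univ _, fun t u htu => ?_⟩)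
      have := e.strictMono htu
      have := he t
      simp only [Fin.mk_lt_mk]
      omega
    · conv_rhs => rw [← A.image_orderEmbOfFin_univ hAcard]
      exact image_congr fun t _ => Nat.sub_add_cancel (he t).1

open Classical in
lemma overlapSum_eq_sum_powersetCard (N M : ℕ) :
    overlapSum N M = ∑ A ∈ powersetCard M (Icc 1 N), ∑ B ∈ powersetCard M (Icc 1 N),
      2 ^ #{a ∈ A ∩ B | A.rank a = B.rank a} := by
  simp_rw [← sum_strictMono_eq_sum_powersetCard N M]
  rw [overlapSum, sum_filter]
  refine sum_congr rfl fun σ _ => ?_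
  rw [sum_filter]
  split_ifs with hσ
  · refine sum_congr rfl fun τ _ => ?_
    by_cases hτ : StrictMono τ
    · rw [if_pos ⟨hσ, hτ⟩, if_pos hτ, card_filter_rank_image_eq
        (hσ.fin_val_add_one.strictMonoOn _) (hτ.fin_val_add_one.strictMonoOn _)]
      simp [Fin.val_inj]
    · rw [if_neg fun h => hτ h.2, if_neg hτ]
  · exact sum_eq_zero fun τ _ => if_neg fun h => hσ h.1

lemma length_sortedPts (S : Finset ℕ) (top : ℕ) : (sortedPts S top).length = #S + 2 := by
  simp [sortedPts]

lemma sortedPts_getD_card_add_one (S : Finset ℕ) (top : ℕ) :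
    (sortedPts S top).getD (#S + 1) 0 = top + 1 := by
  simp [sortedPts]

lemma sortedPts_insert {S : Finset ℕ} {i : ℕ} (hS : ∀ x ∈ S, x < i) (hi : 0 < i) (top : ℕ) :
    sortedPts (insert i S) top = sortedPts S (i - 1) ++ [top + 1] := by
  simp [sortedPts, sort_insert_of_forall_lt hS, Nat.sub_add_cancel hi]

lemma gapProd_empty (N M : ℕ) : gapProd ∅ ∅ N M 0 = N.choose M ^ 2 := by
  simp [gapProd, sortedPts]

lemma gapProd_insert {I J : Finset ℕ} {N M i j ℓ : ℕ} (hI : ∀ x ∈ I, x < i)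
    (hJ : ∀ y ∈ J, y < j) (hi : 0 < i) (hj : 0 < j) (hIcard : #I = ℓ) (hJcard : #J = ℓ) :
    gapProd (insert i I) (insert j J) N M (ℓ + 1) =
      gapProd I J (i - 1) (j - 1) ℓ * (N - i).choose (M - j) ^ 2 := by
  have hprefix (S : Finset ℕ) (top x k : ℕ) (hk : k < #S + 2) :
      (sortedPts S top ++ [x]).getD k 0 = (sortedPts S top).getD k 0 :=
    List.getD_append _ _ _ _ (by rwa [length_sortedPts])
  have hend (S : Finset ℕ) (top x : ℕ) : (sortedPts S top ++ [x]).getD (#S + 1 + 1) 0 = x := by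
    rw [List.getD_append_right _ _ _ _ (by rw [length_sortedPts]), length_sortedPts]
    simp
  rw [gapProd, prod_range_succ, sortedPts_insert hI hi, sortedPts_insert hJ hj, gapProd]
  congr 1
  · refine prod_congr rfl fun k hk => ?_
    rw [mem_range] at hk
    rw [hprefix _ _ _ k (by omega), hprefix _ _ _ (k + 1) (by omega), hprefix _ _ _ k (by omega),
      hprefix _ _ _ (k + 1) (by omega)]
  · subst hIcard
    rw [hend, hprefix _ _ _ _ (by omega), sortedPts_getD_card_add_one, ← hJcard, hend,
      hprefix _ _ _ _ (by omega), sortedPts_getD_card_add_one]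
    congr 2 <;> omega

abbrev Pinned (A I J : Finset ℕ) : Prop := I ⊆ A ∧ I.image A.rank = J

def pinnedSets (N M : ℕ) (I J : Finset ℕ) : Finset (Finset ℕ) :=
  {A ∈ powersetCard M (Icc 1 N) | Pinned A I J}

lemma card_eq_card_of_mem_pinnedSets {N M : ℕ} {I J A : Finset ℕ}
    (hA : A ∈ pinnedSets N M I J) : #I = #J := by
  obtain ⟨-, hIA, rfl⟩ := mem_filter.1 hA
  exact (card_image_of_injOn ((rank_strictMonoOn A).injOn.mono hIA)).symm

lemma mem_pinnedSets_insert {N M i j : ℕ} {I J A : Finset ℕ} (hI : ∀ x ∈ I, x < i)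
    (hJ : ∀ y ∈ J, y < j) (hj : 0 < j) :
    A ∈ pinnedSets N M (insert i I) (insert j J) ↔
      A ∈ powersetCard M (Icc 1 N) ∧ i ∈ A ∧
        A.filter (· < i) ∈ pinnedSets (i - 1) (j - 1) I J := by
  have hIA : I.image (A.filter (· < i)).rank = I.image A.rank :=
    image_congr fun x hx => rank_filter_lt (hI x hx)
  have hjI (hiA : i ∈ A) : A.rank i ∉ I.image A.rank := by
    simp only [mem_image, not_exists, not_and]
    exact fun x hx => (rank_lt_rank hiA (hI x hx)).ne
  simp only [pinnedSets, Pinned, mem_filter, mem_powersetCard, insert_subset_iff, image_insert,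
    hIA]
  constructor
  · rintro ⟨hA, ⟨hiA, hIA⟩, himg⟩
    have hrank : A.rank i = j := by
      by_contra hne
      have hjI : j ∈ insert (A.rank i) (I.image A.rank) := himg ▸ mem_insert_self j J
      have hiJ : A.rank i ∈ insert j J := himg ▸ mem_insert_self _ _
      simp only [mem_insert, mem_image, Ne.symm hne, hne, false_or] at hjI hiJ
      obtain ⟨x, hx, rfl⟩ := hjI
      exact (hJ _ hiJ).not_gt (rank_lt_rank hiA (hI x hx))
    refine ⟨hA, hiA, ⟨⟨fun x hx => ?_, ?_⟩, fun x hx => mem_filter.2 ⟨hIA hx, hI x hx⟩, ?_⟩⟩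
    · obtain ⟨hxA, hxi⟩ := mem_filter.1 hx
      have := mem_Icc.1 (hA.1 hxA)
      exact mem_Icc.2 ⟨this.1, by omega⟩
    · rw [rank_eq_card_filter_lt_add_one hiA] at hrank
      omega
    · rw [← erase_insert (hjI hiA), himg, hrank, erase_insert fun h => (hJ j h).false]
  · rintro ⟨hA, hiA, ⟨-, hcard⟩, hIA, himg⟩
    refine ⟨hA, ⟨hiA, fun x hx => (mem_filter.1 (hIA hx)).1⟩, ?_⟩
    rw [himg, rank_eq_card_filter_lt_add_one hiA, hcard, Nat.sub_add_cancel hj]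

lemma card_pinnedSets_empty (N M : ℕ) : #(pinnedSets N M ∅ ∅) = N.choose M := by
  simp [pinnedSets, Pinned]

lemma card_pinnedSets_insert {N M i j : ℕ} {I J : Finset ℕ} (hI : ∀ x ∈ I, x < i)
    (hJ : ∀ y ∈ J, y < j) (hi : i ∈ Icc 1 N) (hj : j ∈ Icc 1 M) :
    #(pinnedSets N M (insert i I) (insert j J)) =
      #(pinnedSets (i - 1) (j - 1) I J) * (N - i).choose (M - j) := by
  rw [mem_Icc] at hi hj
  have hlt : (Icc 1 N).filter (· < i) = Icc 1 (i - 1) := by ext; simp; omega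
  have hgt : (Icc 1 N).filter (i < ·) = Ioc i N := by ext; simp; omega
  have hsub : pinnedSets (i - 1) (j - 1) I J ⊆ powersetCard (j - 1) ((Icc 1 N).filter (· < i)) :=
    hlt ▸ filter_subset _ _
  rw [← Nat.card_Ioc i N, ← hgt, show M - j = M - (j - 1) - 1 by omega,
    ← card_filter_mem_and_filter_lt_mem hsub (by simp; omega) (by omega)]
  congr 1
  ext A
  rw [mem_pinnedSets_insert hI hJ (by omega), mem_filter]

lemma card_pinnedSets_sq {N M : ℕ} {I J : Finset ℕ} (hI : I ⊆ Icc 1 N) (hJ : J ⊆ Icc 1 M)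
    (hIJ : #I = #J) : #(pinnedSets N M I J) ^ 2 = gapProd I J N M #I := by
  induction I using Finset.induction_on_max generalizing N M J with
  | empty => rw [card_eq_zero.1 hIJ.symm, card_pinnedSets_empty, card_empty, gapProd_empty]
  | insert i I hlt ih =>
    have hJne : J.Nonempty := card_pos.1 (hIJ ▸ card_pos.2 (insert_nonempty i I))
    set j := J.max' hJne
    rw [← insert_erase (J.max'_mem hJne)] at hJ hIJ ⊢
    have hJlt : ∀ y ∈ J.erase j, y < j := fun y hy => J.lt_max'_of_mem_erase_max' hJne hy
    have hi := hI (mem_insert_self i I)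
    have hj := hJ (mem_insert_self j _)
    have hIcard : #I = #(J.erase j) := by
      rwa [card_insert_of_notMem (fun h => (hlt i h).false),
        card_insert_of_notMem (fun h => (hJlt j h).false), Nat.add_right_cancel_iff] at hIJ
    have hIsub : I ⊆ Icc 1 (i - 1) := fun x hx => by
      have := mem_Icc.1 (hI (mem_insert_of_mem hx))
      exact mem_Icc.2 ⟨this.1, by have := hlt x hx; omega⟩
    have hJsub : J.erase j ⊆ Icc 1 (j - 1) := fun y hy => by
      have := mem_Icc.1 (hJ (mem_insert_of_mem hy))
      exact mem_Icc.2 ⟨this.1, by have := hJlt y hy; omega⟩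
    rw [card_pinnedSets_insert hlt hJlt hi hj, mul_pow, ih hIsub hJsub hIcard,
      card_insert_of_notMem (fun h => (hlt i h).false),
      gapProd_insert hlt hJlt (mem_Icc.1 hi).1 (mem_Icc.1 hj).1 rfl hIcard.symm]

lemma card_filter_pinned_and_pinned {N M : ℕ} {A B : Finset ℕ}
    (hA : A ∈ powersetCard M (Icc 1 N)) :
    #{x ∈ (Icc 1 N).powerset ×ˢ (Icc 1 M).powerset | Pinned A x.1 x.2 ∧ Pinned B x.1 x.2} =
      2 ^ #{a ∈ A ∩ B | A.rank a = B.rank a} := by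
  rw [← card_powerset]
  refine card_nbij' Prod.fst (fun I => (I, I.image A.rank)) ?_ ?_ ?_ ?_
  · rintro ⟨I, J⟩ h
    obtain ⟨-, ⟨hIA, hJ⟩, hIB, himg⟩ := mem_filter.1 (mem_coe.1 h)
    dsimp only at hIA hJ hIB himg
    subst hJ
    have := eqOn_of_image_eq_image ((rank_strictMonoOn A).mono hIA)
      ((rank_strictMonoOn B).mono hIB) himg.symm
    refine mem_coe.2 (mem_powerset.2 fun a ha => ?_)
    exact mem_filter.2 ⟨mem_inter.2 ⟨hIA ha, hIB ha⟩, this ha⟩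
  · intro I hI
    have hI := mem_powerset.1 (mem_coe.1 hI)
    have hIA : I ⊆ A := fun a ha => (mem_inter.1 (mem_filter.1 (hI ha)).1).1
    have hIB : I ⊆ B := fun a ha => (mem_inter.1 (mem_filter.1 (hI ha)).1).2
    have hIN : I ⊆ Icc 1 N := hIA.trans (mem_powersetCard.1 hA).1
    have hJM : I.image A.rank ⊆ Icc 1 M := fun r hr => by
      obtain ⟨a, ha, rfl⟩ := mem_image.1 hr
      exact (mem_powersetCard.1 hA).2 ▸ rank_mem_Icc (hIA ha)
    refine mem_coe.2 (mem_filter.2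
      ⟨mem_product.2 ⟨mem_powerset.2 hIN, mem_powerset.2 hJM⟩, ⟨hIA, rfl⟩, hIB, ?_⟩)
    exact image_congr fun a ha => (mem_filter.1 (hI ha)).2.symm
  · rintro ⟨I, J⟩ h
    exact Prod.ext rfl (mem_filter.1 (mem_coe.1 h)).2.1.2
  · intro I _
    rfl

lemma sum_powerset_sq_card_pinnedSets {N M : ℕ} {J : Finset ℕ} (hJ : J ⊆ Icc 1 M) :
    ∑ I ∈ (Icc 1 N).powerset, #(pinnedSets N M I J) ^ 2 =
      ∑ I ∈ powersetCard #J (Icc 1 N), gapProd I J N M #J := by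
  refine (sum_subset (fun I hI => mem_powerset.2 (mem_powersetCard.1 hI).1)
    fun I hI hIJ => ?_).symm.trans (sum_congr rfl fun I hI => ?_)
  · rw [sq_eq_zero_iff, card_eq_zero, eq_empty_iff_forall_notMem]
    exact fun A hA =>
      hIJ (mem_powersetCard.2 ⟨mem_powerset.1 hI, card_eq_card_of_mem_pinnedSets hA⟩)
  · obtain ⟨hIsub, hIcard⟩ := mem_powersetCard.1 hI
    rw [card_pinnedSets_sq hIsub hJ hIcard, hIcard]

theorem gap_product_formula_general (N M : ℕ) :
    overlapSum N M =
      ∑ ℓ ∈ Finset.range (M + 1),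
        ∑ J ∈ Finset.powersetCard ℓ (Finset.Icc 1 M),
          ∑ I ∈ Finset.powersetCard ℓ (Finset.Icc 1 N),
            gapProd I J N M ℓ := by
  calc overlapSum N M
      = ∑ A ∈ powersetCard M (Icc 1 N), ∑ B ∈ powersetCard M (Icc 1 N),
          2 ^ #{a ∈ A ∩ B | A.rank a = B.rank a} := overlapSum_eq_sum_powersetCard N M
    _ = ∑ x ∈ (Icc 1 N).powerset ×ˢ (Icc 1 M).powerset, #(pinnedSets N M x.1 x.2) ^ 2 := by
      simp only [pinnedSets, sum_card_filter_sq]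
      exact sum_congr rfl fun A hA =>
        sum_congr rfl fun B _ => (card_filter_pinned_and_pinned hA).symm
    _ = ∑ J ∈ (Icc 1 M).powerset, ∑ I ∈ powersetCard #J (Icc 1 N), gapProd I J N M #J := by
      rw [sum_product_right]
      exact sum_congr rfl fun J hJ => sum_powerset_sq_card_pinnedSets (mem_powerset.1 hJ)
    _ = _ := by
      rw [sum_powerset, Nat.card_Icc, Nat.add_sub_cancel]
      exact sum_congr rfl fun ℓ _ => sum_congr rfl fun J hJ => by rw [(mem_powersetCard.1 hJ).2]

/-- Gap product formula:
`Σ_{σ,τ ∈ Σ_{N,M}} 2^{⟨σ,τ⟩} = Σ_{ℓ=0}^{M} Σ_{1≤j_1<⋯<j_ℓ≤M} Σ_{1≤i_1<⋯<i_ℓ≤N}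
Π_{k=1}^{ℓ+1} binom(i_k - i_{k-1} - 1, j_k - j_{k-1} - 1)²`. -/
theorem gap_product_formula (N M : ℕ) (hM : 1 ≤ M) (hMN : M ≤ N) :
    overlapSum N M =
      ∑ ℓ ∈ Finset.range (M + 1),
        ∑ J ∈ Finset.powersetCard ℓ (Finset.Icc 1 M),
          ∑ I ∈ Finset.powersetCard ℓ (Finset.Icc 1 N),
            gapProd I J N M ℓ :=
  gap_product_formula_general N M
end

section
/- (Support bound.) Let N be a positive integer and let D be a finite set of pairs (a,b) of positive integers with 1 ≤ b ≤ a such that Σ_{(a,b) ∈ D} a ≤ N+1. Then |D| ≤ (1/2)·( (3(N+1))^{1/3} + 2 )². -/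
open Finset Real


lemma aux_sorted (g : ℕ → ℝ) (hg : Monotone g) :
    ∀ s : Finset ℕ, (∀ x ∈ s, 1 ≤ x) →
      ∑ j ∈ Finset.range s.card, g (j + 1) ≤ ∑ x ∈ s, g x := by
  intro s
  induction s using Finset.strongInduction with
  | _ s ih =>
    intro hs1
    rcases s.eq_empty_or_nonempty with rfl | hne
    · simp
    · have hmem : s.max' hne ∈ s := s.max'_mem hne
      have hsub : s ⊆ Finset.Icc 1 (s.max' hne) := by
        intro x hx
        exact Finset.mem_Icc.2 ⟨hs1 x hx, s.le_max' x hx⟩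
      have hcard : s.card ≤ s.max' hne := by
        simpa using Finset.card_le_card hsub
      have hc : s.card = (s.erase (s.max' hne)).card + 1 := by
        rw [Finset.card_erase_of_mem hmem]
        have : 1 ≤ s.card := Finset.card_pos.2 hne
        omega
      have ih' := ih (s.erase (s.max' hne)) (Finset.erase_ssubset hmem)
        (fun x hx => hs1 x (Finset.mem_of_mem_erase hx))
      calc ∑ j ∈ Finset.range s.card, g (j + 1)
          = ∑ j ∈ Finset.range (s.erase (s.max' hne)).card, g (j + 1)
              + g ((s.erase (s.max' hne)).card + 1) := by
            rw [hc, Finset.sum_range_succ]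
        _ ≤ ∑ x ∈ s.erase (s.max' hne), g x + g (s.max' hne) := by
            refine add_le_add ih' (hg ?_)
            omega
        _ = ∑ x ∈ s, g x := Finset.sum_erase_add s g hmem

lemma aux_lower : ∀ k : ℕ,
    (2 * Real.sqrt 2 / 3) * k * Real.sqrt k ≤ ∑ j ∈ Finset.range k, Real.sqrt (2 * ((j : ℝ) + 1)) := by
  intro k
  induction k with
  | zero => simp
  | succ k ih =>
    rw [Finset.sum_range_succ]
    have hu0 : (0:ℝ) ≤ ((k:ℝ) + 1) := by positivity
    set u := Real.sqrt ((k:ℝ) + 1) with hudef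
    set v := Real.sqrt (k:ℝ) with hvdef
    have hu2 : u ^ 2 = (k:ℝ) + 1 := Real.sq_sqrt hu0
    have hv2 : v ^ 2 = (k:ℝ) := Real.sq_sqrt (Nat.cast_nonneg k)
    have hv : 0 ≤ v := Real.sqrt_nonneg _
    have huv : v ≤ u := Real.sqrt_le_sqrt (by linarith)
    have hu1 : 1 ≤ u := by nlinarith [Real.sqrt_nonneg ((k:ℝ)+1)]
    have hsplit : Real.sqrt (2 * ((k:ℝ) + 1)) = Real.sqrt 2 * u := by
      rw [hudef, ← Real.sqrt_mul (by norm_num : (0:ℝ) ≤ 2)]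
    have h1 : (u - v) * (u + v) = 1 := by nlinarith
    have h4 : 2 * v ^ 2 * ((u - v) * (u + v)) ≤ u * (u + v) := by
      rw [h1]; nlinarith
    have key : 2 * v ^ 2 * (u - v) ≤ u := by nlinarith [h4]
    have hcube : 2 * u ^ 3 ≤ 2 * v ^ 3 + 3 * u := by nlinarith [key]
    have hs2 : (0:ℝ) < Real.sqrt 2 := Real.sqrt_pos.2 (by norm_num)
    push_cast
    rw [hsplit]
    -- goal: (2√2/3)*(k+1)*u ≤ (2√2/3)*k*v + √2*u   (after ih)
    have hmain : (2 * Real.sqrt 2 / 3) * ((k:ℝ) + 1) * u ≤ (2 * Real.sqrt 2 / 3) * (k:ℝ) * v + Real.sqrt 2 * u := by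
      have hr : ((k:ℝ) + 1) * u = u ^ 3 := by rw [← hu2]; ring
      have hrv : (k:ℝ) * v = v ^ 3 := by rw [← hv2]; ring
      rw [mul_assoc, mul_assoc, hr, hrv]
      calc (2 * Real.sqrt 2 / 3) * u ^ 3 ≤ (2 * Real.sqrt 2 / 3) * (v ^ 3 + (3/2) * u) := by
            apply mul_le_mul_of_nonneg_left _ (by positivity)
            linarith
        _ = (2 * Real.sqrt 2 / 3) * v ^ 3 + Real.sqrt 2 * u := by ring
    linarith

lemma aux_even (n : ℕ) : 2 * ((n - 1) * n / 2) = (n - 1) * n := by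
  cases n with
  | zero => simp
  | succ m =>
    have h : Even (m * (m + 1)) := Nat.even_mul_succ_self m
    simpa using Nat.mul_div_cancel' h.two_dvd

lemma aux_lt (a b a' b' : ℕ) (hb : 1 ≤ b) (hba : b ≤ a) (hb' : 1 ≤ b') (hba' : b' ≤ a')
    (h : a < a') : (a - 1) * a + 2 * b < (a' - 1) * a' + 2 * b' := by
  have h1 : a ≤ a' - 1 := by omega
  have h2 : a * (a + 1) ≤ (a' - 1) * a' := by
    have := Nat.mul_le_mul h1 (by omega : a + 1 ≤ a')
    omega
  have h3 : (a - 1) * a + 2 * a = a * (a + 1) := by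
    cases a with
    | zero => omega
    | succ m =>
      simp only [Nat.succ_sub_one]
      ring
  omega

set_option maxHeartbeats 1000000 in
/-- Support bound: if `D` is a finite set of pairs `(a,b)` of positive integers with
`b ≤ a` whose first coordinates sum to at most `N + 1`, then
`|D| ≤ (1/2)((3(N+1))^{1/3} + 2)²`. -/
theorem support_bound (N : ℕ) (hN : 1 ≤ N) (D : Finset (ℕ × ℕ))
    (hD : ∀ p ∈ D, 1 ≤ p.2 ∧ p.2 ≤ p.1)
    (hsum : ∑ p ∈ D, p.1 ≤ N + 1) :
    (D.card : ℝ) ≤ (1 / 2) * ((3 * ((N : ℝ) + 1)) ^ ((1 : ℝ) / 3) + 2) ^ 2 := by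
  classical
  set φ : ℕ × ℕ → ℕ := fun p => (p.1 - 1) * p.1 / 2 + p.2 with hφdef
  have hφ2 : ∀ p : ℕ × ℕ, 2 * φ p = (p.1 - 1) * p.1 + 2 * p.2 := by
    intro p
    simp only [hφdef]
    rw [Nat.mul_add, aux_even]
  -- injectivity on D
  have hinj : ∀ p ∈ D, ∀ q ∈ D, φ p = φ q → p = q := by
    intro p hp q hq heq
    obtain ⟨hpb, hpba⟩ := hD p hp
    obtain ⟨hqb, hqba⟩ := hD q hq
    have h2 : (p.1 - 1) * p.1 + 2 * p.2 = (q.1 - 1) * q.1 + 2 * q.2 := by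
      rw [← hφ2, ← hφ2, heq]
    rcases lt_trichotomy p.1 q.1 with hlt | heq1 | hgt
    · exact absurd h2 (Nat.ne_of_lt (aux_lt _ _ _ _ hpb hpba hqb hqba hlt))
    · have : p.2 = q.2 := by rw [heq1] at h2; omega
      exact Prod.ext heq1 this
    · exact absurd h2.symm (Nat.ne_of_lt (aux_lt _ _ _ _ hqb hqba hpb hpba hgt))
  set s : Finset ℕ := D.image φ with hsdef
  have hcard : s.card = D.card := Finset.card_image_of_injOn hinj
  have hs1 : ∀ x ∈ s, 1 ≤ x := by
    intro x hx
    obtain ⟨p, hp, rfl⟩ := Finset.mem_image.1 hx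
    have := (hD p hp).1
    simp only [hφdef]
    omega
  -- monotone g
  set g : ℕ → ℝ := fun n => Real.sqrt (2 * n) - 1 with hgdef
  have hg : Monotone g := by
    intro a b hab
    simp only [hgdef]
    have : Real.sqrt (2 * (a:ℝ)) ≤ Real.sqrt (2 * (b:ℝ)) := by
      apply Real.sqrt_le_sqrt
      have : (a:ℝ) ≤ (b:ℝ) := by exact_mod_cast hab
      linarith
    linarith
  -- step A: sorted sum bound
  have hA : ∑ j ∈ Finset.range D.card, g (j + 1) ≤ ∑ x ∈ s, g x := by
    rw [← hcard]
    exact aux_sorted g hg s hs1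
  -- step B: sum over image
  have hB : ∑ x ∈ s, g x = ∑ p ∈ D, g (φ p) := Finset.sum_image hinj
  -- step C: pointwise bound
  have hC : ∀ p ∈ D, g (φ p) ≤ (p.1 : ℝ) := by
    intro p hp
    obtain ⟨hpb, hpba⟩ := hD p hp
    have hb : 2 * φ p ≤ (p.1 + 1) ^ 2 := by
      rw [hφ2]
      have h3 : (p.1 - 1) * p.1 + 2 * p.1 = p.1 * (p.1 + 1) := by
        cases hx : p.1 with
        | zero => omega
        | succ m =>
          simp only [Nat.succ_sub_one]
          ring
      have : p.1 * (p.1 + 1) ≤ (p.1 + 1) ^ 2 := by nlinarith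
      omega
    have hbr : (2 : ℝ) * (φ p : ℝ) ≤ ((p.1 : ℝ) + 1) ^ 2 := by exact_mod_cast hb
    have hsq : Real.sqrt (2 * (φ p : ℝ)) ≤ (p.1 : ℝ) + 1 := by
      have := Real.sqrt_le_sqrt hbr
      rwa [Real.sqrt_sq (by positivity)] at this
    simp only [hgdef]
    linarith
  -- step D: total sum bound
  have hDsum : ∑ p ∈ D, (p.1 : ℝ) ≤ (N : ℝ) + 1 := by
    have : ((∑ p ∈ D, p.1 : ℕ) : ℝ) ≤ ((N + 1 : ℕ) : ℝ) := by exact_mod_cast hsum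
    push_cast at this
    simpa using this
  -- step E: lower bound of the sorted sum
  have hE : (2 * Real.sqrt 2 / 3) * D.card * Real.sqrt D.card - D.card ≤ ∑ j ∈ Finset.range D.card, g (j + 1) := by
    have hgj : ∀ j : ℕ, g (j + 1) = Real.sqrt (2 * ((j:ℝ) + 1)) - 1 := by
      intro j
      simp only [hgdef]
      norm_num
    have h1 : ∑ j ∈ Finset.range D.card, g (j + 1)
        = (∑ j ∈ Finset.range D.card, Real.sqrt (2 * ((j:ℝ) + 1))) - D.card := by
      rw [Finset.sum_congr rfl (fun j _ => hgj j), Finset.sum_sub_distrib]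
      simp
    rw [h1]
    have := aux_lower D.card
    linarith
  -- combine the chain
  have hchain : (2 * Real.sqrt 2 / 3) * D.card * Real.sqrt D.card - D.card ≤ (N : ℝ) + 1 := by
    calc (2 * Real.sqrt 2 / 3) * D.card * Real.sqrt D.card - D.card
        ≤ ∑ j ∈ Finset.range D.card, g (j + 1) := hE
      _ ≤ ∑ x ∈ s, g x := hA
      _ = ∑ p ∈ D, g (φ p) := hB
      _ ≤ ∑ p ∈ D, (p.1 : ℝ) := Finset.sum_le_sum hC
      _ ≤ (N : ℝ) + 1 := hDsum
  -- final polynomial step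
  set c : ℝ := (3 * ((N : ℝ) + 1)) ^ ((1 : ℝ) / 3) with hcdef
  have h30 : (0:ℝ) ≤ 3 * ((N : ℝ) + 1) := by positivity
  have hc0 : 0 ≤ c := Real.rpow_nonneg h30 _
  have hc3 : c ^ 3 = 3 * ((N : ℝ) + 1) := by
    rw [hcdef, ← Real.rpow_natCast _ 3, ← Real.rpow_mul h30]
    norm_num
  by_contra hcon
  push_neg at hcon
  set w : ℝ := Real.sqrt D.card with hwdef
  have hw0 : 0 ≤ w := Real.sqrt_nonneg _
  have hw2 : w ^ 2 = (D.card : ℝ) := Real.sq_sqrt (Nat.cast_nonneg _)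
  set s2 : ℝ := Real.sqrt 2 with hs2def
  have hs20 : 0 ≤ s2 := Real.sqrt_nonneg _
  have hs22 : s2 ^ 2 = 2 := Real.sq_sqrt (by norm_num)
  set x : ℝ := s2 * w with hxdef
  have hx0 : 0 ≤ x := mul_nonneg hs20 hw0
  have hx3 : x ^ 3 = 2 * s2 * w ^ 3 := by
    rw [hxdef]; linear_combination s2 * w ^ 3 * hs22
  have hx2 : x ^ 2 = 2 * w ^ 2 := by
    rw [hxdef]; linear_combination w ^ 2 * hs22
  -- c + 2 < x
  have hcx : c + 2 < x := by
    have h1 : (c + 2) ^ 2 < 2 * (D.card : ℝ) := by linarith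
    nlinarith [hw2, hx2, hx0, hc0]
  -- main inequality in terms of x
  have hkey : x ^ 3 - (3/2) * x ^ 2 ≤ c ^ 3 := by
    rw [hx3, hx2, hc3]
    have h1 : (2 * s2 / 3) * (D.card : ℝ) * w = (2 * s2 / 3) * w ^ 3 := by
      rw [← hw2]; ring
    rw [h1] at hchain
    have h2 : (D.card : ℝ) = w ^ 2 := hw2.symm
    rw [h2] at hchain
    linarith
  nlinarith [hkey, hcx, hc0, sq_nonneg (x - c - 2), mul_nonneg hc0 (le_of_lt (by linarith : (0:ℝ) < x - c - 2)),
    mul_nonneg (mul_nonneg hc0 hc0) (le_of_lt (by linarith : (0:ℝ) < x - c - 2)),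
    mul_nonneg (sq_nonneg (x - c - 2)) hc0,
    mul_nonneg (sq_nonneg (x - c - 2)) (le_of_lt (by linarith : (0:ℝ) < x - c - 2))]
end

section
/- (Entropy replacement at scale N.) Fix α ∈ (0,1) and set M := ⌊αN⌋. Then (1/N)·| log Z̄^{≤M} − log Z̃^{≤M} | → 0 as N → ∞. -/
/-!
Grouping the ordered tuples by their multiset `m` of pairs, `Z̄` and `Z̃` become sums of the
same weights `∏ w(x)^{n_x}`, with coefficients the multinomial `L!/∏ n_x!` and
`L^L/∏ n_x^{n_x}` respectively. The multinomial theorem gives `L!/∏ n_x! ≤ L^L/∏ n_x^{n_x}`,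
and Stirling's bounds give the reverse inequality up to a factor `(eL)^D`, `D` being the number
of distinct pairs in `m`. Distinct pairs `(a, b)` with `b ≤ a` and `∑ a = N + 1` number at most
`t² + (N + 1)/t` for every `t` (count those with `a < t` and those with `a ≥ t` separately), so
`D = O(N^{2/3})` and `|log Z̄ - log Z̃| = O(N^{2/3} log N) = o(N)`.
-/

open Filter

/-- `w(a,b) = binom(a-1,b-1)²` for `1 ≤ b ≤ a`, and `0` otherwise. -/
def wfun (a b : ℕ) : ℕ :=
  if 1 ≤ b ∧ b ≤ a then ((a - 1).choose (b - 1)) ^ 2 else 0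

/-- `Z̄^{≤M}`: sum over `L ∈ {1,…,M}` and ordered tuples `((a_1,b_1),…,(a_L,b_L))` of
pairs of positive integers with `b_k ≤ a_k`, `Σ a_k = N+1`, `Σ b_k = M+1`, of
`Π_k w(a_k,b_k)` (tuples encoded as functions `Fin L → Fin (N+1) × Fin (M+1)` via
`a_k = f k .1 + 1`, `b_k = f k .2 + 1`). -/
def ZbarLe (N M : ℕ) : ℕ :=
  ∑ L ∈ Finset.Icc 1 M,
    ∑ f : Fin L → Fin (N + 1) × Fin (M + 1),
      if (∀ k, (f k).2.val ≤ (f k).1.val) ∧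
          (∑ k, ((f k).1.val + 1)) = N + 1 ∧ (∑ k, ((f k).2.val + 1)) = M + 1 then
        ∏ k, wfun ((f k).1.val + 1) ((f k).2.val + 1)
      else 0

/-- The multiset of pairs of positive integers associated to an encoded tuple. -/
def tupleMultiset {N M L : ℕ} (f : Fin L → Fin (N + 1) × Fin (M + 1)) :
    Multiset (ℕ × ℕ) :=
  ↑(List.ofFn fun k => ((f k).1.val + 1, (f k).2.val + 1))

/-- `Z̃^{≤M}`: same sum as `Z̄^{≤M}` but over multisets (unordered tuples), with the
multinomial count `L!/Π_x n_x!` of orderings replaced by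
`exp(L·H(μ)) = L^L / Π_x n_x^{n_x}`, i.e. each admissible multiset `m` of size `L`
contributes `(L^L / Π_x n_x^{n_x}) · Π_x w(x)^{n_x}`. -/
noncomputable def ZtildeLe (N M : ℕ) : ℝ :=
  ∑ L ∈ Finset.Icc 1 M,
    ∑ m ∈ Finset.image (fun f : Fin L → Fin (N + 1) × Fin (M + 1) => tupleMultiset f)
        (Finset.univ.filter fun f : Fin L → Fin (N + 1) × Fin (M + 1) =>
          (∀ k, (f k).2.val ≤ (f k).1.val) ∧
          (∑ k, ((f k).1.val + 1)) = N + 1 ∧ (∑ k, ((f k).2.val + 1)) = M + 1),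
      ((L : ℝ) ^ L / ∏ x ∈ m.toFinset, (m.count x : ℝ) ^ m.count x) *
        ∏ x ∈ m.toFinset, (wfun x.1 x.2 : ℝ) ^ m.count x

open Finset Real
open scoped Nat

section TupleCount

variable {X : Type*} [Fintype X] [DecidableEq X]

def tupleCount (L : ℕ) (m : Multiset X) : ℕ :=
  #{f : Fin L → X | (List.ofFn f : Multiset X) = m}

omit [Fintype X] in
lemma Multiset.cons_eq_iff_mem_and_eq_erase {a : X} {s m : Multiset X} :
    a ::ₘ s = m ↔ a ∈ m ∧ s = m.erase a :=
  ⟨fun h => h ▸ ⟨Multiset.mem_cons_self a s, (Multiset.erase_cons_head a s).symm⟩,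
    fun ⟨h, e⟩ => e ▸ Multiset.cons_erase h⟩

lemma tupleCount_succ (L : ℕ) (m : Multiset X) :
    tupleCount (L + 1) m = ∑ x ∈ m.toFinset, tupleCount L (m.erase x) := by
  have hsplit : tupleCount (L + 1) m = #{p : X × (Fin L → X) | p.1 ::ₘ ↑(List.ofFn p.2) = m} :=
    card_equiv (Fin.consEquiv fun _ => X).symm fun f => by
      simp only [mem_filter_univ]
      simp [Fin.consEquiv, List.ofFn_succ]
      rfl
  rw [hsplit, card_eq_sum_card_fiberwise (f := Prod.fst) (t := m.toFinset) fun p hp => by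
    simp only [coe_filter_univ, Set.mem_ofPred, Multiset.cons_eq_iff_mem_and_eq_erase] at hp
    simpa using hp.1]
  refine sum_congr rfl fun x hx => card_nbij' Prod.snd (fun g => (x, g)) ?_ ?_ ?_ ?_
  · rintro ⟨y, g⟩ hp
    simp only [coe_filter, mem_filter, mem_univ, true_and, Set.mem_ofPred,
      Multiset.cons_eq_iff_mem_and_eq_erase] at hp ⊢
    exact hp.2 ▸ hp.1.2
  · intro g hg
    simp only [coe_filter, mem_filter_univ, Set.mem_ofPred,
      Multiset.cons_eq_iff_mem_and_eq_erase] at hg ⊢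
    simpa [hg] using hx
  · rintro ⟨y, g⟩ hp
    simp only [coe_filter, mem_filter_univ, Set.mem_ofPred] at hp
    simp [hp.2]
  · intro g _
    rfl

lemma prod_factorial_count_eq_mul_erase (m : Multiset X) {x : X} (hx : x ∈ m) :
    ∏ y, (m.count y)! = m.count x * ∏ y, ((m.erase x).count y)! := by
  have hpos : m.count x ≠ 0 := Multiset.count_ne_zero.mpr hx
  rw [← mul_prod_erase _ _ (mem_univ x), ← mul_prod_erase _ _ (mem_univ x),
    Multiset.count_erase_self, ← mul_assoc, Nat.mul_factorial_pred hpos]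
  congr 1
  exact prod_congr rfl fun y hy => by rw [Multiset.count_erase_of_ne (ne_of_mem_erase hy)]

lemma tupleCount_mul_prod_factorial {L : ℕ} {m : Multiset X} (hm : Multiset.card m = L) :
    tupleCount L m * ∏ x, (m.count x)! = L ! := by
  induction L generalizing m with
  | zero =>
    obtain rfl := Multiset.card_eq_zero.mp hm
    simp [tupleCount]
  | succ L ih =>
    have hterm : ∀ x ∈ m.toFinset,
        tupleCount L (m.erase x) * ∏ y, (m.count y)! = m.count x * L ! := fun x hx => by
      have hx : x ∈ m := Multiset.mem_toFinset.mp hx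
      rw [prod_factorial_count_eq_mul_erase m hx, mul_left_comm,
        ih (by rw [Multiset.card_erase_of_mem hx, hm]; rfl)]
    rw [tupleCount_succ, sum_mul, sum_congr rfl hterm, ← sum_mul,
      Multiset.toFinset_sum_count_eq, hm, Nat.factorial_succ]

end TupleCount

lemma Nat.factorial_le_exp_mul_pow {n : ℕ} (hn : n ≠ 0) :
    (n ! : ℝ) ≤ exp 1 * n * (n / exp 1) ^ n := by
  have hseq : Stirling.stirlingSeq n ≤ exp 1 / √2 := by
    obtain ⟨k, rfl⟩ := Nat.exists_eq_succ_of_ne_zero hn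
    simpa [Stirling.stirlingSeq_one] using Stirling.stirlingSeq'_antitone (Nat.zero_le k)
  have hsqrt : √(n : ℝ) ≤ n := by
    have : (1 : ℝ) ≤ n := by exact_mod_cast Nat.one_le_iff_ne_zero.mpr hn
    rw [Real.sqrt_le_left (by positivity)]
    nlinarith
  rw [Stirling.stirlingSeq, div_le_iff₀ (by positivity), Real.sqrt_mul zero_le_two] at hseq
  calc (n ! : ℝ) ≤ exp 1 / √2 * (√2 * √n * (n / exp 1) ^ n) := hseq
    _ = exp 1 * √n * (n / exp 1) ^ n := by field_simp
    _ ≤ exp 1 * n * (n / exp 1) ^ n := by gcongr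

lemma Nat.factorial_mul_exp_le {c n : ℕ} (hcn : c ≤ n) :
    (c ! : ℝ) * exp c ≤ (if c ≠ 0 then exp 1 * n else 1) * c ^ c := by
  split_ifs with hc
  · calc (c ! : ℝ) * exp c ≤ exp 1 * c * (c / exp 1) ^ c * exp c := by
          gcongr; exact Nat.factorial_le_exp_mul_pow hc
      _ = exp 1 * c * c ^ c := by
          rw [div_pow, ← Real.exp_nat_mul, mul_one]; field_simp
      _ ≤ exp 1 * n * c ^ c := by gcongr
  · simp [not_not.mp hc]

section Multinomial

variable {ι : Type*} [Fintype ι]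

lemma Nat.multinomial_mul_prod_pow_le [DecidableEq ι] (k : ι → ℕ) :
    Nat.multinomial univ k * ∏ i, k i ^ k i ≤ (∑ i, k i) ^ ∑ i, k i := by
  rw [sum_pow_eq_sum_piAntidiag]
  exact single_le_sum (f := fun j => (Nat.multinomial univ j : ℕ) * ∏ i, k i ^ j i)
    (fun _ _ => Nat.zero_le _) (mem_piAntidiag.mpr ⟨rfl, fun i _ => mem_univ i⟩)

lemma Nat.pow_le_exp_mul_pow_card_mul_multinomial (k : ι → ℕ) :
    ((∑ i, k i : ℕ) : ℝ) ^ (∑ i, k i) ≤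
      (exp 1 * (∑ i, k i : ℕ)) ^ #{i | k i ≠ 0} * Nat.multinomial univ k *
        ∏ i, (k i : ℝ) ^ k i := by
  set n := ∑ i, k i with hn
  have hprod : (∏ i, ((k i)! : ℝ)) * exp n ≤
      (exp 1 * n) ^ #{i | k i ≠ 0} * ∏ i, (k i : ℝ) ^ k i := by
    calc (∏ i, ((k i)! : ℝ)) * exp n = ∏ i, ((k i)! * exp (k i)) := by
          rw [prod_mul_distrib, ← Real.exp_sum, hn, Nat.cast_sum]
      _ ≤ ∏ i, ((if k i ≠ 0 then exp 1 * n else 1) * (k i : ℝ) ^ k i) :=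
          prod_le_prod (fun _ _ => by positivity) fun i _ =>
            Nat.factorial_mul_exp_le (single_le_sum (fun _ _ => Nat.zero_le _) (mem_univ i))
      _ = _ := by rw [prod_mul_distrib, ← prod_filter, prod_const]
  have hspec : (∏ i, ((k i)! : ℝ)) * Nat.multinomial univ k = n ! := by
    exact_mod_cast Nat.multinomial_spec univ k
  have hexp : (n : ℝ) ^ n ≤ exp n * n ! := by
    have := Real.pow_div_factorial_le_exp (n : ℝ) n.cast_nonneg n
    rwa [div_le_iff₀ (by positivity)] at this
  refine le_of_mul_le_mul_left ?_ (prod_pos fun i _ => Nat.cast_pos.mpr (k i).factorial_pos :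
    (0 : ℝ) < ∏ i, ((k i)! : ℝ))
  calc (∏ i, ((k i)! : ℝ)) * (n : ℝ) ^ n ≤ (∏ i, ((k i)! : ℝ)) * exp n * n ! := by
        rw [mul_assoc]; gcongr
    _ ≤ (exp 1 * n) ^ #{i | k i ≠ 0} * (∏ i, (k i : ℝ) ^ k i) * n ! := by gcongr
    _ = _ := by rw [← hspec]; ring

end Multinomial

section TupleCountBounds

variable {X : Type*} [Fintype X] [DecidableEq X] {L : ℕ} {m : Multiset X}

lemma tupleCount_eq_multinomial (hm : Multiset.card m = L) :
    tupleCount L m = Nat.multinomial univ (m.count ·) := by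
  have hspec := Nat.multinomial_spec univ (m.count ·)
  rw [Multiset.sum_count_eq_card fun a _ => mem_univ a, hm,
    ← tupleCount_mul_prod_factorial hm, mul_comm] at hspec
  exact (Nat.eq_of_mul_eq_mul_right (prod_pos fun x _ => (m.count x).factorial_pos) hspec).symm

lemma tupleCount_mul_prod_pow_le (hm : Multiset.card m = L) :
    tupleCount L m * ∏ x, m.count x ^ m.count x ≤ L ^ L := by
  have := Nat.multinomial_mul_prod_pow_le (m.count ·)
  rwa [Multiset.sum_count_eq_card fun a _ => mem_univ a, hm, ← tupleCount_eq_multinomial hm]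
    at this

lemma pow_le_exp_mul_pow_card_mul_tupleCount (hm : Multiset.card m = L) :
    (L : ℝ) ^ L ≤
      (exp 1 * L) ^ #m.toFinset * tupleCount L m * ∏ x, (m.count x : ℝ) ^ m.count x := by
  have := Nat.pow_le_exp_mul_pow_card_mul_multinomial (m.count ·)
  have hsupp : #{x | m.count x ≠ 0} = #m.toFinset := by
    congr 1; ext x; simp
  rwa [Multiset.sum_count_eq_card fun a _ => mem_univ a, hm, ← tupleCount_eq_multinomial hm,
    hsupp] at this

end TupleCountBounds

lemma card_mul_le_pow_three_add_sum (s : Finset (ℕ × ℕ)) (hs : ∀ x ∈ s, x.2 ≤ x.1) (t : ℕ) :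
    #s * t ≤ t ^ 3 + ∑ x ∈ s, x.1 := by
  have hsmall : #{x ∈ s | x.1 < t} ≤ t ^ 2 := by
    calc #{x ∈ s | x.1 < t} ≤ #(range t ×ˢ range t) := card_le_card fun x hx => by
          rw [mem_filter] at hx
          simpa using ⟨hx.2, (hs x hx.1).trans_lt hx.2⟩
      _ = t ^ 2 := by rw [card_product, card_range, sq]
  have hlarge : #{x ∈ s | ¬x.1 < t} * t ≤ ∑ x ∈ s, x.1 :=
    calc #{x ∈ s | ¬x.1 < t} * t = #{x ∈ s | ¬x.1 < t} • t := (smul_eq_mul _ _).symm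
      _ ≤ ∑ x ∈ s with ¬x.1 < t, x.1 :=
          card_nsmul_le_sum _ _ _ fun x hx => not_lt.mp (mem_filter.mp hx).2
      _ ≤ ∑ x ∈ s, x.1 := sum_le_sum_of_subset (filter_subset _ _)
  rw [← card_filter_add_card_filter_not (fun x : ℕ × ℕ => x.1 < t), add_mul]
  have : #{x ∈ s | x.1 < t} * t ≤ t ^ 3 :=
    (Nat.mul_le_mul_right t hsmall).trans_eq (pow_succ t 2).symm
  omega

lemma le_six_mul_rpow_of_forall_mul_le {D N : ℕ} (hN : 1 ≤ N)
    (h : ∀ t : ℕ, D * t ≤ t ^ 3 + (N + 1)) : (D : ℝ) ≤ 6 * (N : ℝ) ^ (2 / 3 : ℝ) := by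
  have hN' : (1 : ℝ) ≤ N := by exact_mod_cast hN
  set c := (N : ℝ) ^ (1 / 3 : ℝ) with hc
  have hc1 : 1 ≤ c := one_le_rpow hN' (by norm_num)
  have hc3 : c ^ 3 = N := by
    rw [hc, ← rpow_natCast, ← rpow_mul (by positivity)]; norm_num
  have hc2 : c ^ 2 = (N : ℝ) ^ (2 / 3 : ℝ) := by
    rw [hc, ← rpow_natCast, ← rpow_mul (by positivity)]; norm_num
  set t := ⌈c⌉₊
  have hct : c ≤ t := Nat.le_ceil c
  have htc : (t : ℝ) < c + 1 := Nat.ceil_lt_add_one (by positivity)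
  have hDt : (D : ℝ) * t ≤ t ^ 3 + (N + 1) := by exact_mod_cast h t
  have ht2 : (t : ℝ) ^ 2 ≤ 4 * c ^ 2 := by nlinarith
  rw [← hc2]
  refine le_of_mul_le_mul_right ?_ (by linarith : (0 : ℝ) < t)
  calc (D : ℝ) * t ≤ t ^ 2 * t + 2 * c ^ 3 := by nlinarith
    _ ≤ 4 * c ^ 2 * t + 2 * c ^ 2 * t := add_le_add (by gcongr) (by nlinarith)
    _ = 6 * c ^ 2 * t := by ring

lemma Finset.prod_toFinset_map_count {X Y R : Type*} [Fintype X] [DecidableEq X] [DecidableEq Y]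
    [CommMonoid R] {e : X → Y} (he : Function.Injective e) (m : Multiset X) {F : ℕ → R}
    (hF : F 0 = 1) :
    ∏ y ∈ (m.map e).toFinset, F ((m.map e).count y) = ∏ x, F (m.count x) := by
  simp_rw [Multiset.toFinset_map, prod_image fun x _ y _ h => he h,
    Multiset.count_map_eq_count' e m he]
  exact prod_subset (subset_univ _) fun x _ hx => by
    rw [Multiset.count_eq_zero_of_notMem (Multiset.mem_toFinset.not.mp hx), hF]

lemma Multiset.sum_toFinset_le_sum_map {α : Type*} [DecidableEq α] (m : Multiset α) (g : α → ℕ) :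
    ∑ x ∈ m.toFinset, g x ≤ (m.map g).sum := by
  rw [sum_multiset_map_count]
  exact sum_le_sum fun x hx =>
    Nat.le_mul_of_pos_left _ (Multiset.count_pos.mpr (Multiset.mem_toFinset.mp hx))

section PartitionFunctions

variable {N M L : ℕ}

abbrev Pair (N M : ℕ) := Fin (N + 1) × Fin (M + 1)

def pairCode (p : Pair N M) : ℕ × ℕ := (p.1.val + 1, p.2.val + 1)

lemma pairCode_injective : Function.Injective (pairCode (N := N) (M := M)) := by
  rintro ⟨a, b⟩ ⟨c, d⟩ h
  simp only [pairCode, Prod.mk.injEq, add_left_inj] at h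
  exact Prod.ext (Fin.ext h.1) (Fin.ext h.2)

lemma tupleMultiset_eq_map (f : Fin L → Pair N M) :
    tupleMultiset f = (List.ofFn f : Multiset (Pair N M)).map pairCode := by
  simp only [tupleMultiset, Multiset.map_coe, List.map_ofFn]
  rfl

variable (N M) in
def Admissible (m : Multiset (ℕ × ℕ)) : Prop :=
  (∀ x ∈ m, x.2 ≤ x.1) ∧ (m.map Prod.fst).sum = N + 1 ∧ (m.map Prod.snd).sum = M + 1

variable (N M L) in
def admissibleTuples : Finset (Fin L → Pair N M) :=
  {f | (∀ k, (f k).2.val ≤ (f k).1.val) ∧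
    (∑ k, ((f k).1.val + 1)) = N + 1 ∧ (∑ k, ((f k).2.val + 1)) = M + 1}

lemma mem_admissibleTuples_iff {f : Fin L → Pair N M} :
    f ∈ admissibleTuples N M L ↔ Admissible N M (tupleMultiset f) := by
  simp [admissibleTuples, Admissible, tupleMultiset, List.mem_ofFn, List.map_ofFn, List.sum_ofFn]

variable (N M L) in
def orderCount (m : Multiset (ℕ × ℕ)) : ℕ :=
  #{f : Fin L → Pair N M | tupleMultiset f = m}

def weight (m : Multiset (ℕ × ℕ)) : ℕ := ∏ x ∈ m.toFinset, wfun x.1 x.2 ^ m.count x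

noncomputable def expEntropy (L : ℕ) (m : Multiset (ℕ × ℕ)) : ℝ :=
  (L : ℝ) ^ L / ∏ x ∈ m.toFinset, (m.count x : ℝ) ^ m.count x

lemma prod_wfun_eq_weight (f : Fin L → Pair N M) :
    ∏ k, wfun ((f k).1.val + 1) ((f k).2.val + 1) = weight (tupleMultiset f) := by
  rw [weight, ← prod_multiset_map_count, tupleMultiset, Multiset.map_coe, List.map_ofFn,
    Multiset.prod_coe, List.prod_ofFn]
  rfl

lemma ZbarLe_eq_sum (N M : ℕ) :
    ZbarLe N M = ∑ L ∈ Icc 1 M, ∑ m ∈ (admissibleTuples N M L).image tupleMultiset,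
      orderCount N M L m * weight m := by
  refine sum_congr rfl fun L _ => ?_
  rw [← sum_filter]
  change ∑ f ∈ admissibleTuples N M L, _ = _
  simp_rw [prod_wfun_eq_weight]
  rw [sum_comp]
  refine sum_congr rfl fun m hm => ?_
  obtain ⟨f₀, hf₀, rfl⟩ := mem_image.mp hm
  rw [smul_eq_mul, orderCount]
  congr 2
  ext f
  simp only [mem_filter, mem_univ, true_and, and_iff_right_iff_imp]
  exact fun h => mem_admissibleTuples_iff.mpr (h ▸ mem_admissibleTuples_iff.mp hf₀)

lemma ZtildeLe_eq_sum (N M : ℕ) :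
    ZtildeLe N M = ∑ L ∈ Icc 1 M, ∑ m ∈ (admissibleTuples N M L).image tupleMultiset,
      expEntropy L m * weight m := by
  simp only [ZtildeLe, weight, expEntropy, Nat.cast_prod, Nat.cast_pow]
  rfl

lemma orderCount_tupleMultiset (f : Fin L → Pair N M) :
    orderCount N M L (tupleMultiset f) = tupleCount L (List.ofFn f : Multiset (Pair N M)) := by
  simp only [orderCount, tupleCount, tupleMultiset_eq_map,
    (Multiset.map_injective pairCode_injective).eq_iff]

lemma orderCount_le_expEntropy (f : Fin L → Pair N M) :
    (orderCount N M L (tupleMultiset f) : ℝ) ≤ expEntropy L (tupleMultiset f) := by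
  have hcard : Multiset.card (List.ofFn f : Multiset (Pair N M)) = L := by simp
  rw [expEntropy, le_div_iff₀ (prod_pos fun x hx => by
      have := Multiset.count_pos.mpr (Multiset.mem_toFinset.mp hx); positivity),
    orderCount_tupleMultiset, tupleMultiset_eq_map,
    prod_toFinset_map_count pairCode_injective _ (F := fun n => (n : ℝ) ^ n) (by simp)]
  exact_mod_cast tupleCount_mul_prod_pow_le hcard

lemma expEntropy_le_mul_orderCount (f : Fin L → Pair N M) :
    expEntropy L (tupleMultiset f) ≤
      (exp 1 * L) ^ #(tupleMultiset f).toFinset * orderCount N M L (tupleMultiset f) := by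
  have hcard : Multiset.card (List.ofFn f : Multiset (Pair N M)) = L := by simp
  rw [expEntropy, div_le_iff₀ (prod_pos fun x hx => by
      have := Multiset.count_pos.mpr (Multiset.mem_toFinset.mp hx); positivity),
    orderCount_tupleMultiset, tupleMultiset_eq_map,
    prod_toFinset_map_count pairCode_injective _ (F := fun n => (n : ℝ) ^ n) (by simp),
    Multiset.toFinset_map, card_image_of_injective _ pairCode_injective]
  exact pow_le_exp_mul_pow_card_mul_tupleCount hcard

lemma length_le_of_mem_admissibleTuples {f : Fin L → Pair N M}
    (hf : f ∈ admissibleTuples N M L) : L ≤ N + 1 := by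
  rw [admissibleTuples, mem_filter] at hf
  calc L = ∑ _k : Fin L, 1 := by simp
    _ ≤ ∑ k, ((f k).1.val + 1) := sum_le_sum fun _ _ => Nat.le_add_left 1 _
    _ = N + 1 := hf.2.2.1

lemma card_toFinset_le_of_mem_admissibleTuples (hN : 1 ≤ N)
    {f : Fin L → Pair N M} (hf : f ∈ admissibleTuples N M L) :
    (#(tupleMultiset f).toFinset : ℝ) ≤ 6 * (N : ℝ) ^ (2 / 3 : ℝ) := by
  obtain ⟨hle, hsum, -⟩ := mem_admissibleTuples_iff.mp hf
  refine le_six_mul_rpow_of_forall_mul_le hN fun t => ?_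
  calc #(tupleMultiset f).toFinset * t ≤ t ^ 3 + ∑ x ∈ (tupleMultiset f).toFinset, x.1 :=
        card_mul_le_pow_three_add_sum _ (fun x hx => hle x (Multiset.mem_toFinset.mp hx)) t
    _ ≤ t ^ 3 + (N + 1) := by
        grw [Multiset.sum_toFinset_le_sum_map, hsum]

end PartitionFunctions

lemma ZbarLe_le_ZtildeLe (N M : ℕ) : (ZbarLe N M : ℝ) ≤ ZtildeLe N M := by
  rw [ZbarLe_eq_sum, ZtildeLe_eq_sum]
  push_cast
  gcongr with L _ m hm
  obtain ⟨f, -, rfl⟩ := mem_image.mp hm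
  exact orderCount_le_expEntropy f

lemma exp_one_mul_pow_le {N L D : ℕ} (hN : 1 ≤ N) (hL : L ≤ N + 1)
    (hD : (D : ℝ) ≤ 6 * (N : ℝ) ^ (2 / 3 : ℝ)) :
    (exp 1 * L) ^ D ≤ exp (6 * (N : ℝ) ^ (2 / 3 : ℝ) * (2 + log N)) := by
  have hN' : (1 : ℝ) ≤ N := by exact_mod_cast hN
  have hL' : (L : ℝ) ≤ N + 1 := by exact_mod_cast hL
  have he : 2 ≤ exp 1 := by linarith [add_one_le_exp (1 : ℝ)]
  calc (exp 1 * L) ^ D ≤ (exp 1 * (exp 1 * N)) ^ D := by gcongr; nlinarith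
    _ = exp (D * (2 + log N)) := by
        rw [← exp_log (by positivity : (0 : ℝ) < N), ← mul_assoc, ← exp_add, ← exp_add,
          ← exp_nat_mul, log_exp, one_add_one_eq_two]
    _ ≤ exp (6 * (N : ℝ) ^ (2 / 3 : ℝ) * (2 + log N)) := by
        have := log_nonneg hN'
        gcongr

lemma ZtildeLe_le_exp_mul_ZbarLe {N : ℕ} (hN : 1 ≤ N) (M : ℕ) :
    ZtildeLe N M ≤ exp (6 * (N : ℝ) ^ (2 / 3 : ℝ) * (2 + log N)) * ZbarLe N M := by
  rw [ZbarLe_eq_sum, ZtildeLe_eq_sum]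
  push_cast
  simp_rw [mul_sum]
  refine sum_le_sum fun L _ => sum_le_sum fun m hm => ?_
  obtain ⟨f, hf, rfl⟩ := mem_image.mp hm
  calc expEntropy L (tupleMultiset f) * weight (tupleMultiset f)
      ≤ (exp 1 * L) ^ #(tupleMultiset f).toFinset * orderCount N M L (tupleMultiset f) *
          weight (tupleMultiset f) := by
        gcongr; exact expEntropy_le_mul_orderCount f
    _ ≤ exp (6 * (N : ℝ) ^ (2 / 3 : ℝ) * (2 + log N)) * orderCount N M L (tupleMultiset f) *
          weight (tupleMultiset f) := by
        gcongr
        exact exp_one_mul_pow_le hN (length_le_of_mem_admissibleTuples hf)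
          (card_toFinset_le_of_mem_admissibleTuples hN hf)
    _ = _ := by ring

lemma abs_log_sub_log_le_of_le_exp_mul {x y B : ℝ} (hB : 0 ≤ B) (hx : 0 ≤ x) (hxy : x ≤ y)
    (hyx : y ≤ exp B * x) : |log x - log y| ≤ B := by
  rcases hx.eq_or_lt with rfl | hx
  · obtain rfl : y = 0 := le_antisymm (by simpa using hyx) hxy
    simpa using hB
  rw [abs_sub_comm, abs_of_nonneg (sub_nonneg.mpr (log_le_log hx hxy))]
  have := log_le_log (hx.trans_le hxy) hyx
  rw [log_mul (exp_ne_zero _) hx.ne', log_exp] at this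
  linarith

lemma rpow_two_thirds_mul_two_add_log_le {N : ℕ} (hN : 1 ≤ N) :
    6 * (N : ℝ) ^ (2 / 3 : ℝ) * (2 + log N) ≤ 48 * (N : ℝ) ^ (5 / 6 : ℝ) := by
  have hN' : (1 : ℝ) ≤ N := by exact_mod_cast hN
  have hlog : log N ≤ 6 * (N : ℝ) ^ (1 / 6 : ℝ) := by
    have := log_le_rpow_div (by positivity : (0 : ℝ) ≤ N) (by norm_num : (0 : ℝ) < 1 / 6)
    linarith
  have h1 : 1 ≤ (N : ℝ) ^ (1 / 6 : ℝ) := one_le_rpow hN' (by norm_num)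
  have hsplit : (N : ℝ) ^ (5 / 6 : ℝ) = (N : ℝ) ^ (2 / 3 : ℝ) * (N : ℝ) ^ (1 / 6 : ℝ) := by
    rw [← rpow_add (by positivity)]; norm_num
  rw [hsplit]
  have := rpow_nonneg (by positivity : (0 : ℝ) ≤ N) (2 / 3)
  nlinarith

lemma abs_log_ZbarLe_sub_log_ZtildeLe_le {N : ℕ} (hN : 1 ≤ N) (M : ℕ) :
    |log (ZbarLe N M : ℝ) - log (ZtildeLe N M)| ≤ 48 * (N : ℝ) ^ (5 / 6 : ℝ) := by
  refine (abs_log_sub_log_le_of_le_exp_mul ?_ (Nat.cast_nonneg _) (ZbarLe_le_ZtildeLe N M)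
    (ZtildeLe_le_exp_mul_ZbarLe hN M)).trans (rpow_two_thirds_mul_two_add_log_le hN)
  have : 0 ≤ log (N : ℝ) := log_nonneg (by exact_mod_cast hN)
  positivity

theorem entropy_replacement_general (α : ℝ) :
    Tendsto (fun N : ℕ =>
        (1 / N : ℝ) *
          |Real.log (ZbarLe N ⌊α * N⌋₊ : ℝ) - Real.log (ZtildeLe N ⌊α * N⌋₊)|)
      atTop (nhds 0) := by
  have hrate : Tendsto (fun N : ℕ => 48 * (N : ℝ) ^ (-(1 / 6) : ℝ)) atTop (nhds 0) := by
    simpa using ((tendsto_rpow_neg_atTop (by norm_num : (0 : ℝ) < 1 / 6)).comp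
      tendsto_natCast_atTop_atTop).const_mul 48
  refine tendsto_of_tendsto_of_tendsto_of_le_of_le' tendsto_const_nhds hrate
    (Eventually.of_forall fun N => by positivity) ?_
  filter_upwards [eventually_ge_atTop 1] with N hN
  have hN' : (0 : ℝ) < N := by exact_mod_cast hN
  calc (1 / N : ℝ) * |log (ZbarLe N ⌊α * N⌋₊ : ℝ) - log (ZtildeLe N ⌊α * N⌋₊)|
      ≤ (1 / N : ℝ) * (48 * (N : ℝ) ^ (5 / 6 : ℝ)) := by
        gcongr; exact abs_log_ZbarLe_sub_log_ZtildeLe_le hN _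
    _ = 48 * (N : ℝ) ^ (-(1 / 6) : ℝ) := by
        rw [show (-(1 / 6) : ℝ) = 5 / 6 - 1 by norm_num, rpow_sub_one hN'.ne']
        ring

/-- Entropy replacement at scale `N`: for `α ∈ (0,1)` and `M = ⌊αN⌋`,
`(1/N)·|log Z̄^{≤M} - log Z̃^{≤M}| → 0` as `N → ∞`. -/
theorem entropy_replacement (α : ℝ) (hα : α ∈ Set.Ioo (0:ℝ) 1) :
    Tendsto (fun N : ℕ =>
        (1 / N : ℝ) *
          |Real.log (ZbarLe N ⌊α * N⌋₊ : ℝ) - Real.log (ZtildeLe N ⌊α * N⌋₊)|)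
      atTop (nhds 0) :=
  entropy_replacement_general α
end

section
/- (Explicit solution of the algebraic system.) For every real number c > 1, the system of equations x²(1 − 2y) − 2x(1 + y) + 1 = 0 and (1 + y) − x(1 − 2y) = c·y·(x + 1) has a unique solution (x,y) ∈ (0,1) × (0,∞), given explicitly by x = ( √(4c² − 4c + 9) − 3 ) / (2c) and y = (1 − x)² / ( 2x(1 + x) ). -/
/-!
Eliminating `y` with the first equation, `y = (1 - x)² / (2x(1 + x))`, turns the second one into
`(1 - x)(c x² + 3x + 1 - c) = 0`. On `(0, 1)` the first factor does not vanish, and since the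
constant term `1 - c` is negative the quadratic factor has exactly one positive root, which lies
below `1` because the quadratic equals `4` at `x = 1`.
-/

open Real

theorem pos_and_quadratic_eq_zero_iff {a b k x : ℝ} (ha : 0 < a) (hk : k < 0) :
    0 < x ∧ a * (x * x) + b * x + k = 0 ↔ x = (-b + √(discrim a b k)) / (2 * a) := by
  have hdisc : b ^ 2 < discrim a b k := by rw [discrim]; nlinarith
  set s := √(discrim a b k)
  have hs : discrim a b k = s * s := (mul_self_sqrt (by nlinarith)).symm
  obtain ⟨hbs, hsb⟩ : -s < b ∧ b < s :=
    abs_lt_of_sq_lt_sq' (by rwa [sq s, ← hs]) (sqrt_nonneg _)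
  have h2a : 0 < 2 * a := by positivity
  rw [quadratic_eq_zero_iff ha.ne' hs]
  constructor
  · rintro ⟨hx, rfl | rfl⟩
    · rfl
    · exact absurd hx (div_neg_of_neg_of_pos (by linarith) h2a).not_gt
  · rintro rfl
    exact ⟨div_pos (by linarith) h2a, Or.inl rfl⟩

theorem first_equation_iff (x y : ℝ) :
    x ^ 2 * (1 - 2 * y) - 2 * x * (1 + y) + 1 = 0 ↔ (1 - x) ^ 2 = 2 * x * (1 + x) * y := by
  constructor <;> intro h <;> linear_combination h

theorem second_equation_iff_of_first {c x y : ℝ} (hx : 0 < x)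
    (h : (1 - x) ^ 2 = 2 * x * (1 + x) * y) :
    (1 + y) - x * (1 - 2 * y) = c * y * (x + 1) ↔
      (1 - x) * (c * (x * x) + 3 * x + (1 - c)) = 0 := by
  have hxy : 2 * x * (1 + x) * ((1 + y) - x * (1 - 2 * y) - c * y * (x + 1)) =
      (1 - x) * (c * (x * x) + 3 * x + (1 - c)) := by
    linear_combination -((1 + 2 * x) - c * (x + 1)) * h
  rw [← hxy, mul_eq_zero, sub_eq_zero, or_iff_right (by positivity)]

/-- Explicit solution of the algebraic system: for every real `c > 1`, the system
`x²(1 - 2y) - 2x(1 + y) + 1 = 0` and `(1 + y) - x(1 - 2y) = c·y·(x + 1)` has a unique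
solution `(x,y) ∈ (0,1) × (0,∞)`, given by `x = (√(4c² - 4c + 9) - 3)/(2c)` and
`y = (1 - x)²/(2x(1 + x))`. -/
theorem algebraic_system_solution (c : ℝ) (hc : 1 < c) :
    ∀ x y : ℝ,
      (x ∈ Set.Ioo (0:ℝ) 1 ∧ 0 < y ∧
        x ^ 2 * (1 - 2 * y) - 2 * x * (1 + y) + 1 = 0 ∧
        (1 + y) - x * (1 - 2 * y) = c * y * (x + 1)) ↔
      (x = (Real.sqrt (4 * c ^ 2 - 4 * c + 9) - 3) / (2 * c) ∧
        y = (1 - x) ^ 2 / (2 * x * (1 + x))) := by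
  have hroot : (√(4 * c ^ 2 - 4 * c + 9) - 3) / (2 * c) =
      (-3 + √(discrim c 3 (1 - c))) / (2 * c) := by
    rw [discrim]; ring_nf
  intro x y
  have hquad := pos_and_quadratic_eq_zero_iff (x := x) (b := 3) (by linarith : 0 < c)
    (by linarith : 1 - c < 0)
  rw [first_equation_iff, hroot]
  constructor
  · rintro ⟨⟨hx0, hx1⟩, -, h1, h2⟩
    have hQ := (mul_eq_zero.1 ((second_equation_iff_of_first hx0 h1).1 h2)).resolve_left
      (sub_ne_zero.2 hx1.ne')
    exact ⟨hquad.1 ⟨hx0, hQ⟩, (eq_div_iff (by positivity)).2 (by rw [h1]; ring)⟩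
  · rintro ⟨hx, hy⟩
    obtain ⟨hx0, hQ⟩ := hquad.2 hx
    have hx1 : x < 1 := by nlinarith
    have h1 : (1 - x) ^ 2 = 2 * x * (1 + x) * y := by rw [hy]; field_simp
    exact ⟨⟨hx0, hx1⟩, hy ▸ div_pos (pow_pos (sub_pos.2 hx1) 2) (by positivity), h1,
      (second_equation_iff_of_first hx0 h1).2 (by rw [hQ, mul_zero])⟩
end
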